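/- arXiv:2309.10749 — 3 statements merged into one kernel-verified Lean document; each statement's English description precedes it below -/
import Mathlib

section
/- Let B* ≥ 1 be a cooperation bound. Suppose that in the graph g, vertex i has degree B* and every neighbor of i in g has degree B*, while in the graph g' (on the same vertex set), vertex i has degree at most B* and every neighbor of i in g' has degree at most B*. Then u_i(g) ≥ u_i(g'). -/
variable {V : Type*}

/-- Degree of vertex `i` in the simple graph `g`. -/
noncomputable def deg [Fintype V] (g : SimpleGraph V) (i : V) : ℕ :=
  (g.neighborSet i).ncard

/-- Per-period utility of vertex `i` in the graph `g`:
`u_i(g) = α·v·(1 − (1−p)^{d_i(g)}) − Σ_{j ∈ N_i(g)} α·c·(1 − (1−p)^{d_j(g)})/d_j(g)`. -/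
noncomputable def util [Fintype V] (α v c p : ℝ) (g : SimpleGraph V) (i : V) : ℝ :=
  α * v * (1 - (1 - p) ^ deg g i) -
    ∑ j ∈ (g.neighborSet i).toFinite.toFinset,
      α * c * (1 - (1 - p) ^ deg g j) / (deg g j)

/-- The edge `ij` is sustainable at `g`. -/
def Sustainable [Fintype V] (α v c p δ γ : ℝ) (g : SimpleGraph V) (i j : V) : Prop :=
  (δ / (1 - δ)) * (util α v c p g i - util α v c p (g \ SimpleGraph.edge i j) i) ≥ c - γ ∧
  (δ / (1 - δ)) * (util α v c p g j - util α v c p (g \ SimpleGraph.edge i j) j) ≥ c - γ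

/-- A graph is stable if every one of its edges is sustainable at it. -/
def Stable [Fintype V] (α v c p δ γ : ℝ) (g : SimpleGraph V) : Prop :=
  ∀ i j : V, g.Adj i j → Sustainable α v c p δ γ g i j

/-- `f(n) = −(c − γ) + (δ/(1−δ))·( α·v·((1−p)^{n−1} − (1−p)^n) − (α·c/n)·(1 − (1−p)^n) )`. -/
noncomputable def fpay (α v c p δ γ : ℝ) (n : ℕ) : ℝ :=
  -(c - γ) + (δ / (1 - δ)) *
    (α * v * ((1 - p) ^ (n - 1) - (1 - p) ^ n) - (α * c / n) * (1 - (1 - p) ^ n))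

/-- `B` is a cooperation bound: `f(n) ≥ 0` for `1 ≤ n ≤ B` and `f(n) < 0` for `n > B`. -/
def IsCoopBound (α v c p δ γ : ℝ) (B : ℕ) : Prop :=
  ∀ n : ℕ, 1 ≤ n → (fpay α v c p δ γ n ≥ 0 ↔ n ≤ B)

private lemma ratio_mono {x : ℝ} (hx0 : 0 ≤ x) (hx1 : x ≤ 1) {m n : ℕ}
    (hm : 1 ≤ m) (hmn : m ≤ n) :
    (1 - x ^ n) / n ≤ (1 - x ^ m) / m := by
  have hn : 1 ≤ n := hm.trans hmn
  have hmR : (0:ℝ) < m := by exact_mod_cast hm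
  have hnR : (0:ℝ) < n := by exact_mod_cast hn
  rw [div_le_div_iff₀ hnR hmR]
  have gs : ∀ k : ℕ, 1 - x ^ k = (1 - x) * ∑ i ∈ Finset.range k, x ^ i := by
    intro k; linear_combination geom_sum_mul x k
  rw [gs m, gs n]
  have hsplit : ∑ i ∈ Finset.range m, x ^ i + ∑ i ∈ Finset.Ico m n, x ^ i
      = ∑ i ∈ Finset.range n, x ^ i := Finset.sum_range_add_sum_Ico _ hmn
  have h1 : ∑ i ∈ Finset.Ico m n, x ^ i ≤ ((n:ℝ) - m) * x ^ m := by
    have := Finset.sum_le_card_nsmul (Finset.Ico m n) (fun i => x ^ i) (x ^ m)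
      (fun i hi => pow_le_pow_of_le_one hx0 hx1 (Finset.mem_Ico.mp hi).1)
    rw [Nat.card_Ico, nsmul_eq_mul] at this
    calc ∑ i ∈ Finset.Ico m n, x ^ i ≤ ((n - m : ℕ) : ℝ) * x ^ m := this
      _ = ((n:ℝ) - m) * x ^ m := by rw [Nat.cast_sub hmn]
  have h2 : (m:ℝ) * x ^ m ≤ ∑ i ∈ Finset.range m, x ^ i := by
    have := Finset.card_nsmul_le_sum (Finset.range m) (fun i => x ^ i) (x ^ m)
      (fun i hi => pow_le_pow_of_le_one hx0 hx1 (le_of_lt (Finset.mem_range.mp hi)))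
    rwa [Finset.card_range, nsmul_eq_mul] at this
  have hnm : (0:ℝ) ≤ (n:ℝ) - m := sub_nonneg.mpr (by exact_mod_cast hmn)
  have h3 := mul_le_mul_of_nonneg_right h1 hmR.le
  have h4 := mul_le_mul_of_nonneg_left h2 hnm
  have key : (∑ i ∈ Finset.range n, x ^ i) * m ≤ (∑ i ∈ Finset.range m, x ^ i) * n := by
    rw [← hsplit]; nlinarith [h3, h4]
  nlinarith [mul_le_mul_of_nonneg_left key (sub_nonneg.mpr hx1)]

theorem full_network_is_best [Fintype V] (α v c p δ γ : ℝ)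
    (hα : 0 < α) (hv : 0 < v) (hc : 0 < c) (hp0 : 0 < p) (hp1 : p < 1)
    (hδ0 : 0 < δ) (hδ1 : δ < 1) (hγ0 : 0 ≤ γ) (hγc : γ < c)
    (B : ℕ) (hB1 : 1 ≤ B) (hB : IsCoopBound α v c p δ γ B)
    (g g' : SimpleGraph V) (i : V)
    (hdi : deg g i = B) (hnbr : ∀ j ∈ g.neighborSet i, deg g j = B)
    (hdi' : deg g' i ≤ B) (hnbr' : ∀ j ∈ g'.neighborSet i, deg g' j ≤ B) :
    util α v c p g i ≥ util α v c p g' i := by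
  set x : ℝ := 1 - p with hxdef
  have hx0 : 0 ≤ x := by simp [hxdef]; linarith
  have hx1 : x ≤ 1 := by simp [hxdef]; linarith
  have hBR : (0:ℝ) < B := by exact_mod_cast hB1
  set E : ℝ := α * c / B * (1 - x ^ B) with hEdef
  -- step inequality from the cooperation bound
  have step : ∀ n : ℕ, 1 ≤ n → n ≤ B → E ≤ α * v * (x ^ (n - 1) - x ^ n) := by
    intro n hn hnB
    have hf : fpay α v c p δ γ n ≥ 0 := (hB n hn).mpr hnB
    unfold fpay at hf
    have hfrac : 0 < δ / (1 - δ) := div_pos hδ0 (by linarith)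
    have hbr : 0 ≤ α * v * (x ^ (n - 1) - x ^ n) - (α * c / n) * (1 - x ^ n) := by
      by_contra hneg
      push_neg at hneg
      nlinarith [mul_neg_of_pos_of_neg hfrac hneg]
    have hratio : α * c / B * (1 - x ^ B) ≤ α * c / n * (1 - x ^ n) := by
      have := ratio_mono hx0 hx1 hn hnB
      have hac : (0:ℝ) < α * c := mul_pos hα hc
      calc α * c / B * (1 - x ^ B) = α * c * ((1 - x ^ B) / B) := by ring
        _ ≤ α * c * ((1 - x ^ n) / n) := by
            exact mul_le_mul_of_nonneg_left this hac.le
        _ = α * c / n * (1 - x ^ n) := by ring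
    rw [hEdef]; linarith
  -- telescoping
  have tele : ∀ k d : ℕ, d + k = B → (k:ℝ) * E ≤ α * v * (x ^ d - x ^ B) := by
    intro k
    induction k with
    | zero => intro d hd; subst hd; simp
    | succ k ih =>
      intro d hd
      have hd' : (d + 1) + k = B := by omega
      have h1 := ih (d + 1) hd'
      have h2 := step (d + 1) (by omega) (by omega)
      simp only [Nat.add_sub_cancel] at h2
      push_cast
      linarith
  -- value of util g i
  have hTmem : ∀ j ∈ (g.neighborSet i).toFinite.toFinset, j ∈ g.neighborSet i := by
    intro j hj; rwa [Set.Finite.mem_toFinset] at hj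
  have hTcard : ((g.neighborSet i).toFinite.toFinset).card = B := by
    rw [← Set.ncard_eq_toFinset_card]; exact hdi
  have hugi : util α v c p g i = α * v * (1 - x ^ B) - α * c * (1 - x ^ B) := by
    unfold util
    rw [hdi]
    have hsum : ∑ j ∈ (g.neighborSet i).toFinite.toFinset,
        α * c * (1 - x ^ deg g j) / (deg g j)
        = ∑ j ∈ (g.neighborSet i).toFinite.toFinset, α * c * (1 - x ^ B) / B := by
      refine Finset.sum_congr rfl fun j hj => ?_
      rw [hnbr j (hTmem j hj)]
    rw [hsum, Finset.sum_const, hTcard, nsmul_eq_mul, ← hxdef]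
    field_simp
  -- bound util g' i
  have hT'mem : ∀ j ∈ (g'.neighborSet i).toFinite.toFinset, j ∈ g'.neighborSet i := by
    intro j hj; rwa [Set.Finite.mem_toFinset] at hj
  have hT'card : ((g'.neighborSet i).toFinite.toFinset).card = deg g' i := by
    rw [← Set.ncard_eq_toFinset_card]; rfl
  have hterm : ∀ j ∈ (g'.neighborSet i).toFinite.toFinset,
      E ≤ α * c * (1 - x ^ deg g' j) / (deg g' j) := by
    intro j hj
    have hadj : j ∈ g'.neighborSet i := hT'mem j hj
    have hjd1 : 1 ≤ deg g' j := by
      have : (g'.neighborSet j).Nonempty := ⟨i, (g'.adj_comm i j).mp hadj⟩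
      exact (Set.ncard_pos (Set.toFinite _)).mpr this
    have hjdB : deg g' j ≤ B := hnbr' j hadj
    have := ratio_mono hx0 hx1 hjd1 hjdB
    have hac : (0:ℝ) < α * c := mul_pos hα hc
    calc E = α * c * ((1 - x ^ B) / B) := by rw [hEdef]; ring
      _ ≤ α * c * ((1 - x ^ deg g' j) / (deg g' j)) :=
          mul_le_mul_of_nonneg_left this hac.le
      _ = α * c * (1 - x ^ deg g' j) / (deg g' j) := by ring
  have hsum' : (deg g' i : ℝ) * E ≤ ∑ j ∈ (g'.neighborSet i).toFinite.toFinset,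
      α * c * (1 - x ^ deg g' j) / (deg g' j) := by
    have := Finset.card_nsmul_le_sum ((g'.neighborSet i).toFinite.toFinset)
      (fun j => α * c * (1 - x ^ deg g' j) / (deg g' j)) E hterm
    rwa [hT'card, nsmul_eq_mul] at this
  have hugi' : util α v c p g' i ≤ α * v * (1 - x ^ deg g' i) - (deg g' i : ℝ) * E := by
    unfold util
    linarith
  -- conclude
  have htel := tele (B - deg g' i) (deg g' i) (by omega)
  have hBE : α * c * (1 - x ^ B) = (B:ℝ) * E := by
    rw [hEdef]; field_simp
  rw [hugi]
  have hcast : ((B - deg g' i : ℕ) : ℝ) = (B:ℝ) - deg g' i := by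
    rw [Nat.cast_sub hdi']
  rw [hcast] at htel
  linarith
end

section
/- Let B* be a cooperation bound. If the graph g has a vertex of degree strictly greater than B*, then g is not stable: for any vertex i of maximum degree in g (so d_i(g) > B*), every edge ij incident to i satisfies (δ/(1−δ))·(u_i(g) − u_i(g − ij)) < c − γ, i.e., is not sustainable at g. -/
variable {V : Type*}

open Finset in
lemma geom_frac_mono {q : ℝ} (hq0 : 0 ≤ q) (hq1 : q ≤ 1) {m d : ℕ} (hm : 1 ≤ m) (hmd : m ≤ d) :
    (1 - q ^ d) / d ≤ (1 - q ^ m) / m := by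
  have hd : 1 ≤ d := hm.trans hmd
  rw [div_le_div_iff₀ (by exact_mod_cast hd) (by exact_mod_cast hm)]
  have hgs : ∀ n : ℕ, 1 - q ^ n = (1 - q) * ∑ k ∈ range n, q ^ k := by
    intro n
    have h := geom_sum_mul q n
    linarith [h]
  rw [hgs m, hgs d]
  have key : (m : ℝ) * ∑ k ∈ range d, q ^ k ≤ (d : ℝ) * ∑ k ∈ range m, q ^ k := by
    have hsplit : ∑ k ∈ range d, q ^ k = (∑ k ∈ range m, q ^ k) + ∑ k ∈ Ico m d, q ^ k := by
      rw [Finset.range_eq_Ico, ← Finset.sum_Ico_consecutive _ (Nat.zero_le m) hmd, Finset.range_eq_Ico]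
    have hcast : ((d - m : ℕ) : ℝ) = (d : ℝ) - m := Nat.cast_sub hmd
    have hT : ∑ k ∈ Ico m d, q ^ k ≤ ((d:ℝ) - m) * q ^ (m - 1) := by
      have := Finset.sum_le_card_nsmul (Ico m d) (fun k => q ^ k) (q ^ (m - 1))
        (fun x hx => pow_le_pow_of_le_one hq0 hq1 (le_trans (Nat.sub_le m 1) (mem_Ico.mp hx).1))
      rw [← hcast]
      simpa [Nat.card_Ico, nsmul_eq_mul] using this
    have hSm : (m : ℝ) * q ^ (m - 1) ≤ ∑ k ∈ range m, q ^ k := by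
      have := Finset.card_nsmul_le_sum (range m) (fun k => q ^ k) (q ^ (m - 1))
        (fun x hx => pow_le_pow_of_le_one hq0 hq1 (Nat.le_sub_one_of_lt (mem_range.mp hx)))
      simpa [nsmul_eq_mul] using this
    have hdm : (0:ℝ) ≤ (d:ℝ) - m := by rw [← hcast]; positivity
    have hmpos : (0:ℝ) ≤ (m:ℝ) := by positivity
    rw [hsplit, mul_add]
    nlinarith [mul_le_mul_of_nonneg_left hT hmpos, mul_le_mul_of_nonneg_left hSm hdm]
  have h1q : 0 ≤ 1 - q := by linarith
  nlinarith [key]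

open Classical in
lemma nbr_del_i [Fintype V] (g : SimpleGraph V) {i j : V} (hadj : g.Adj i j) :
    (g \ SimpleGraph.edge i j).neighborSet i = g.neighborSet i \ {j} := by
  have hne : i ≠ j := hadj.ne
  ext x
  simp only [SimpleGraph.mem_neighborSet, SimpleGraph.sdiff_adj, SimpleGraph.edge_adj,
    Set.mem_diff, Set.mem_singleton_iff]
  constructor
  · rintro ⟨h1, h2⟩
    exact ⟨h1, fun hx => h2 ⟨Or.inl ⟨trivial, hx⟩, by simpa [hx] using h1.ne⟩⟩
  · rintro ⟨h1, h2⟩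
    refine ⟨h1, fun hx => ?_⟩
    rcases hx.1 with ⟨-, rfl⟩ | ⟨rfl, rfl⟩
    · exact h2 rfl
    · exact hne rfl

lemma nbr_del_other [Fintype V] (g : SimpleGraph V) {i j : V} (k : V) (hki : k ≠ i) (hkj : k ≠ j) :
    (g \ SimpleGraph.edge i j).neighborSet k = g.neighborSet k := by
  ext x
  simp only [SimpleGraph.mem_neighborSet, SimpleGraph.sdiff_adj, SimpleGraph.edge_adj]
  constructor
  · exact fun h => h.1
  · intro h
    refine ⟨h, fun hx => ?_⟩
    rcases hx.1 with ⟨rfl, rfl⟩ | ⟨rfl, rfl⟩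
    · exact hki rfl
    · exact hkj rfl

lemma deg_del_i [Fintype V] (g : SimpleGraph V) {i j : V} (hadj : g.Adj i j) :
    deg (g \ SimpleGraph.edge i j) i = deg g i - 1 := by
  rw [deg, nbr_del_i g hadj, Set.ncard_diff_singleton_of_mem (show j ∈ g.neighborSet i from hadj), deg]

lemma deg_del_other [Fintype V] (g : SimpleGraph V) {i j : V} (k : V) (hki : k ≠ i) (hkj : k ≠ j) :
    deg (g \ SimpleGraph.edge i j) k = deg g k := by
  rw [deg, nbr_del_other g k hki hkj, deg]

lemma util_diff [Fintype V] (α v c p : ℝ) (g : SimpleGraph V) {i j : V} (hadj : g.Adj i j) :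
    util α v c p g i - util α v c p (g \ SimpleGraph.edge i j) i =
      α * v * ((1 - p) ^ (deg g i - 1) - (1 - p) ^ (deg g i))
      - α * c * (1 - (1 - p) ^ deg g j) / (deg g j) := by
  classical
  have hd_i := deg_del_i g hadj
  have hj : j ∈ (g.neighborSet i).toFinite.toFinset := by
    simp only [Set.Finite.mem_toFinset]; exact hadj
  have hsum : ∑ x ∈ ((g \ SimpleGraph.edge i j).neighborSet i).toFinite.toFinset,
      α * c * (1 - (1 - p) ^ deg (g \ SimpleGraph.edge i j) x) / (deg (g \ SimpleGraph.edge i j) x)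
      = ∑ x ∈ ((g.neighborSet i).toFinite.toFinset).erase j,
      α * c * (1 - (1 - p) ^ deg g x) / (deg g x) := by
    apply Finset.sum_congr
    · ext x
      simp only [Set.Finite.mem_toFinset, Finset.mem_erase, nbr_del_i g hadj, Set.mem_diff,
        Set.mem_singleton_iff]
      tauto
    · intro x hx
      rw [Finset.mem_erase, Set.Finite.mem_toFinset] at hx
      have hax : g.Adj i x := hx.2
      rw [deg_del_other g x hax.ne' hx.1]
  rw [util, util, hd_i, hsum, ← Finset.add_sum_erase _ _ hj]
  ring

theorem max_degree_above_bound_not_stable [Fintype V] (α v c p δ γ : ℝ)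
    (hα : 0 < α) (hv : 0 < v) (hc : 0 < c) (hp0 : 0 < p) (hp1 : p < 1)
    (hδ0 : 0 < δ) (hδ1 : δ < 1) (hγ0 : 0 ≤ γ) (hγc : γ < c)
    (B : ℕ) (hB : IsCoopBound α v c p δ γ B)
    (g : SimpleGraph V) (i : V)
    (hmax : ∀ j : V, deg g j ≤ deg g i) (hdi : B < deg g i) :
    ¬ Stable α v c p δ γ g ∧
    ∀ j : V, g.Adj i j →
      (δ / (1 - δ)) * (util α v c p g i - util α v c p (g \ SimpleGraph.edge i j) i) < c - γ := by
  have hq0 : (0:ℝ) ≤ 1 - p := by linarith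
  have hq1 : (1:ℝ) - p ≤ 1 := by linarith
  have hr : 0 < δ / (1 - δ) := div_pos hδ0 (by linarith)
  have key : ∀ j : V, g.Adj i j →
      (δ / (1 - δ)) * (util α v c p g i - util α v c p (g \ SimpleGraph.edge i j) i) < c - γ := by
    intro j hadj
    have hm1 : 1 ≤ deg g j :=
      (Set.ncard_pos (Set.toFinite _)).mpr ⟨i, hadj.symm⟩
    have hmd : deg g j ≤ deg g i := hmax j
    have hd1 : 1 ≤ deg g i := hm1.trans hmd
    have hfneg : fpay α v c p δ γ (deg g i) < 0 :=
      lt_of_not_ge fun h => Nat.not_le.mpr hdi ((hB _ hd1).mp h)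
    rw [util_diff α v c p g hadj]
    have hmono := geom_frac_mono hq0 hq1 hm1 hmd
    rw [fpay] at hfneg
    have hdiv : α * c * (1 - (1-p) ^ deg g i) / (deg g i) ≤
        α * c * (1 - (1-p) ^ deg g j) / (deg g j) := by
      rw [mul_div_assoc, mul_div_assoc]
      exact mul_le_mul_of_nonneg_left hmono (by positivity)
    have h3 := mul_le_mul_of_nonneg_left hdiv hr.le
    have hd0 : (0:ℝ) < (deg g i : ℝ) := by exact_mod_cast hd1
    have heq : (α * c / (deg g i : ℝ)) * (1 - (1-p) ^ deg g i)
        = α * c * (1 - (1-p) ^ deg g i) / (deg g i) := by ring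
    rw [heq] at hfneg
    nlinarith [h3, hfneg]
  refine ⟨?_, key⟩
  intro hs
  have hpos : 0 < deg g i := by omega
  obtain ⟨j, hj⟩ := (Set.ncard_pos (Set.toFinite _)).mp hpos
  have hadj : g.Adj i j := hj
  exact absurd (hs i j hadj).1 (not_le.mpr (key j hadj))
end

section
/- Let B* be a cooperation bound. If every vertex of the graph g has degree exactly B*, then every edge of g is sustainable at g; that is, g is stable. -/
variable {V : Type*}

private lemma edge_comm' (i j : V) : SimpleGraph.edge i j = SimpleGraph.edge j i := by
  ext x y
  simp only [SimpleGraph.edge_adj]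
  tauto

private lemma nbhd_del_self (g : SimpleGraph V) {i j : V} (hij : g.Adj i j) :
    (g \ SimpleGraph.edge i j).neighborSet i = g.neighborSet i \ {j} := by
  ext x
  simp only [SimpleGraph.mem_neighborSet, SimpleGraph.sdiff_adj, SimpleGraph.edge_adj,
    Set.mem_diff, Set.mem_singleton_iff]
  have hne := hij.ne
  constructor
  · rintro ⟨h1, h2⟩
    refine ⟨h1, fun hx => h2 ?_⟩
    subst hx
    exact ⟨by tauto, h1.ne⟩
  · rintro ⟨h1, h2⟩
    have h1x := h1.ne
    refine ⟨h1, fun hcon => ?_⟩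
    tauto

private lemma nbhd_del_other (g : SimpleGraph V) {i j k : V} (hki : k ≠ i) (hkj : k ≠ j) :
    (g \ SimpleGraph.edge i j).neighborSet k = g.neighborSet k := by
  ext x
  simp only [SimpleGraph.mem_neighborSet, SimpleGraph.sdiff_adj, SimpleGraph.edge_adj]
  constructor
  · exact fun h => h.1
  · intro h
    refine ⟨h, ?_⟩
    rintro ⟨(⟨rfl, rfl⟩ | ⟨rfl, rfl⟩), -⟩
    · exact hki rfl
    · exact hkj rfl

private lemma key [Fintype V] (α v c p δ γ : ℝ)
    (B : ℕ) (hB : IsCoopBound α v c p δ γ B)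
    (g : SimpleGraph V) (hreg : ∀ i : V, deg g i = B) {i j : V} (hij : g.Adj i j) :
    (δ / (1 - δ)) * (util α v c p g i - util α v c p (g \ SimpleGraph.edge i j) i) ≥ c - γ := by
  classical
  set g' := g \ SimpleGraph.edge i j with hg'
  have hjmem : j ∈ g.neighborSet i := hij
  have hB1 : 1 ≤ B := by
    rw [← hreg i]
    exact (Set.ncard_pos ((g.neighborSet i).toFinite)).2 ⟨j, hjmem⟩
  -- degrees in g'
  have hdegi' : deg g' i = B - 1 := by
    rw [deg, nbhd_del_self g hij, Set.ncard_diff_singleton_of_mem hjmem, ← deg, hreg i]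
  have hdegother : ∀ k, k ≠ i → k ≠ j → deg g' k = B := by
    intro k hki hkj
    rw [deg, nbhd_del_other g hki hkj, ← deg, hreg k]
  -- neighbor finsets
  have hF' : (g'.neighborSet i).toFinite.toFinset
      = ((g.neighborSet i).toFinite.toFinset).erase j := by
    ext x
    simp only [Set.Finite.mem_toFinset, Finset.mem_erase, nbhd_del_self g hij,
      Set.mem_diff, Set.mem_singleton_iff]
    rw [hg', nbhd_del_self g hij, Set.mem_diff, Set.mem_singleton_iff]
    tauto
  set q : ℝ := 1 - p
  set t : V → ℝ := fun k => α * c * (1 - q ^ deg g k) / (deg g k) with ht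
  -- the sum in util g' i equals the sum over the erased finset with the same terms
  have hsum : ∑ k ∈ (g'.neighborSet i).toFinite.toFinset,
      α * c * (1 - q ^ deg g' k) / (deg g' k)
      = ∑ k ∈ ((g.neighborSet i).toFinite.toFinset).erase j, t k := by
    rw [hF']
    apply Finset.sum_congr rfl
    intro k hk
    rw [Finset.mem_erase, Set.Finite.mem_toFinset] at hk
    have hki : k ≠ i := (SimpleGraph.mem_neighborSet g i k |>.1 hk.2).ne'
    rw [ht]
    simp [hdegother k hki hk.1, hreg k]
  have hsplit : ∑ k ∈ ((g.neighborSet i).toFinite.toFinset).erase j, t k + t j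
      = ∑ k ∈ (g.neighborSet i).toFinite.toFinset, t k :=
    Finset.sum_erase_add _ _ ((g.neighborSet i).toFinite.mem_toFinset.2 hjmem)
  have hdiff : util α v c p g i - util α v c p g' i
      = α * v * (q ^ (B - 1) - q ^ B) - α * c * (1 - q ^ B) / B := by
    rw [util, util, hsum, hdegi', hreg i, ← hsplit]
    have : t j = α * c * (1 - q ^ B) / B := by rw [ht]; simp [hreg j]
    rw [this]
    ring
  have hf : fpay α v c p δ γ B ≥ 0 := (hB B hB1).2 le_rfl
  rw [fpay] at hf
  have hBR : (B : ℝ) ≠ 0 := by positivity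
  rw [hdiff]
  have : α * c / ↑B * (1 - (1 - p) ^ B) = α * c * (1 - q ^ B) / B := by ring
  rw [this] at hf
  linarith

theorem regular_bound_network_stable [Fintype V] (α v c p δ γ : ℝ)
    (hα : 0 < α) (hv : 0 < v) (hc : 0 < c) (hp0 : 0 < p) (hp1 : p < 1)
    (hδ0 : 0 < δ) (hδ1 : δ < 1) (hγ0 : 0 ≤ γ) (hγc : γ < c)
    (B : ℕ) (hB : IsCoopBound α v c p δ γ B)
    (g : SimpleGraph V) (hreg : ∀ i : V, deg g i = B) :
    Stable α v c p δ γ g := by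
  intro i j hij
  constructor
  · exact key α v c p δ γ B hB g hreg hij
  · rw [edge_comm' i j]
    exact key α v c p δ γ B hB g hreg hij.symm
end
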